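/- arXiv:1902.05906 — 2 statements merged into one kernel-verified Lean document; each statement's English description precedes it below -/
import Mathlib

section
/- Let h₀ and h₁ be inner functions on 𝔻. Suppose that for each integer k ≥ 0 there exists an inner function g_k such that g_k · h₀^k = h₁^k · h₀ (as holomorphic functions on 𝔻), i.e., h₀·(h₁/h₀)^k is an inner function for each k ≥ 0. Then there exists an inner function q such that q · h₀ = h₁, i.e., h₁/h₀ is an inner function. -/
open Complex MeasureTheory Filter Set Metric

noncomputable section

/-- The open unit disk in `ℂ`. -/
def unitDisk : Set ℂ := Metric.ball (0 : ℂ) 1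

/-- `h` is an inner function on the unit disk: it is holomorphic and bounded on `𝔻`,
and for a.e. `t` the radial limit `lim_{r→1⁻} h(r e^{it})` exists and has modulus `1`. -/
def IsInner (h : ℂ → ℂ) : Prop :=
  DifferentiableOn ℂ h unitDisk ∧
  (∃ C : ℝ, ∀ z ∈ unitDisk, ‖h z‖ ≤ C) ∧
  ∀ᵐ t : ℝ ∂volume, ∃ L : ℂ, ‖L‖ = 1 ∧
    Filter.Tendsto (fun r : ℝ => h ((r : ℂ) * Complex.exp (t * Complex.I)))
      (nhdsWithin 1 (Set.Iio 1)) (nhds L)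

/-- A single Blaschke factor: `z` if `a = 0`, and `(|a|/a)·(a − z)/(1 − conj a · z)` otherwise. -/
def blaschkeFactor (a : ℂ) (z : ℂ) : ℂ :=
  if a = 0 then z
  else ((‖a‖ : ℂ) / a) * ((a - z) / (1 - (starRingEnd ℂ) a * z))

/-- `B` coincides on the unit disk with a finite Blaschke product
`c · ∏ (|aₙ|/aₙ)(aₙ − z)/(1 − conj aₙ · z)` with `|c| = 1` and all `aₙ ∈ 𝔻`. -/
def IsFiniteBlaschke (B : ℂ → ℂ) : Prop :=
  ∃ (c : ℂ) (N : ℕ) (a : Fin N → ℂ),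
    ‖c‖ = 1 ∧ (∀ n, a n ∈ unitDisk) ∧
    ∀ z ∈ unitDisk, B z = c * ∏ n, blaschkeFactor (a n) z

/-- `g` is an outer function on the unit disk. -/
def IsOuter (g : ℂ → ℂ) : Prop :=
  DifferentiableOn ℂ g unitDisk ∧
  ∃ G : ℝ → ℝ, (∀ t, 0 ≤ G t) ∧
    IntervalIntegrable (fun t => Real.log (G t)) volume 0 (2 * Real.pi) ∧
    ∀ z ∈ unitDisk,
      g z = Complex.exp ((1 / (2 * Real.pi) : ℂ) *
        ∫ t in (0:ℝ)..(2 * Real.pi),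
          ((Complex.exp (t * Complex.I) + z) / (Complex.exp (t * Complex.I) - z)) *
            (Real.log (G t) : ℂ))

/-- The Smirnov class `N⁺`: the zero function together with all products of an
inner function and an outer function. -/
def MemSmirnov (f : ℂ → ℂ) : Prop :=
  (∀ z ∈ unitDisk, f z = 0) ∨
  ∃ h g : ℂ → ℂ, IsInner h ∧ IsOuter g ∧ ∀ z ∈ unitDisk, f z = h z * g z

/-!
An inner function is bounded by `1`: by the Poisson formula on the circle of radius `r < 1`,
`‖h z‖` is at most the Poisson average of `‖h‖` over that circle, and dominated convergence lets
`r → 1`, where `‖h‖ → 1` almost everywhere.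

Comparing vanishing orders in `gₖ h₀ ^ k = h₁ ^ k h₀` for `k = ord h₀ + 1` gives
`ord h₀ ≤ ord h₁` at every point, so `h₁ / h₀` extends holomorphically to a function `q` on the
disk. Off the zeros of `h₀`, `‖q‖ ^ k ‖h₀‖ = ‖gₖ‖ ≤ 1` for all `k` forces `‖q‖ ≤ 1`, hence
`‖q‖ ≤ 1` everywhere by continuity; the radial limits of `q` are the quotients of those of `h₁`
and `h₀`.
-/

open Topology Real

section PoissonBound

lemma continuousAt_poissonKernel {c w ζ : ℂ} (h : ζ ≠ w) : ContinuousAt (poissonKernel c w) ζ := by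
  simp_rw [funext (poissonKernel_def c w)]
  exact ContinuousAt.div (by fun_prop) (by fun_prop) (by simpa [sub_eq_zero] using h)

lemma poissonKernel_nonneg_of_mem_sphere {c w ζ : ℂ} {R : ℝ} (hw : w ∈ ball c R)
    (hζ : ζ ∈ sphere c R) : 0 ≤ poissonKernel c w ζ := by
  rw [mem_ball_iff_norm] at hw
  rw [mem_sphere_iff_norm] at hζ
  rw [poissonKernel_def, hζ]
  exact div_nonneg (by nlinarith [norm_nonneg (w - c)]) (by positivity)

lemma poissonKernel_le_of_mem_sphere {w ζ : ℂ} {R : ℝ} (hw : w ∈ ball 0 R) (hζ : ζ ∈ sphere 0 R) :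
    poissonKernel 0 w ζ ≤ (R + ‖w‖) / (R - ‖w‖) := by
  simpa [poissonKernel_eq_re_herglotzRieszKernel, herglotzRieszKernel_def]
    using re_herglotzRieszKernel_le hζ hw

lemma circleAverage_poissonKernel {c w : ℂ} {R : ℝ} (hw : w ∈ ball c R) :
    circleAverage (poissonKernel c w) c R = 1 := by
  simpa [Pi.mul_def] using
    (InnerProductSpace.harmonicContOnCl_const (c := (1 : ℝ))).circleAverage_poissonKernel_smul hw

variable {E : Type*} [NormedAddCommGroup E] [NormedSpace ℂ E]

lemma tendsto_circleAverage_poissonKernel_mul_norm {f : ℂ → E}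
    (hf : DifferentiableOn ℂ f (ball 0 1)) {C : ℝ} (hC : ∀ z ∈ ball (0 : ℂ) 1, ‖f z‖ ≤ C)
    (hlim : ∀ᵐ θ : ℝ, Tendsto (fun r : ℝ ↦ ‖f (circleMap 0 r θ)‖) (𝓝[<] 1) (𝓝 1))
    {w : ℂ} (hw : w ∈ ball (0 : ℂ) 1) :
    Tendsto (fun r ↦ circleAverage (fun ζ ↦ poissonKernel 0 w ζ * ‖f ζ‖) 0 r) (𝓝[<] 1) (𝓝 1) := by
  obtain ⟨r₀, hr₀, hr₀1⟩ := exists_between (mem_ball_zero_iff.1 hw)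
  have hsphere {r : ℝ} (hr : r ∈ Ioo r₀ 1) (θ : ℝ) : circleMap 0 r θ ∈ sphere 0 r :=
    circleMap_mem_sphere 0 (by linarith [norm_nonneg w, hr.1]) θ
  have hwr {r : ℝ} (hr : r ∈ Ioo r₀ 1) : w ∈ ball 0 r := mem_ball_zero_iff.2 (hr₀.trans hr.1)
  have hdisk {r : ℝ} (hr : r ∈ Ioo r₀ 1) (θ : ℝ) : circleMap 0 r θ ∈ ball (0 : ℂ) 1 :=
    sphere_subset_ball hr.2 (hsphere hr θ)
  suffices Tendsto (fun r ↦ circleAverage (fun ζ ↦ poissonKernel 0 w ζ * ‖f ζ‖) 0 r) (𝓝[<] 1)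
      (𝓝 (circleAverage (poissonKernel 0 w) 0 1)) by
    rwa [circleAverage_poissonKernel hw] at this
  simp_rw [circleAverage_def]
  refine .const_smul ?_ _
  refine intervalIntegral.tendsto_integral_filter_of_dominated_convergence
    (fun _ ↦ 2 / (r₀ - ‖w‖) * C) ?_ ?_ intervalIntegrable_const ?_
  · filter_upwards [Ioo_mem_nhdsLT hr₀1] with r hr
    refine (continuous_iff_continuousAt.2 fun θ ↦ ?_).aestronglyMeasurable
    have hfθ : ContinuousAt f (circleMap 0 r θ) :=
      (hf.differentiableAt (isOpen_ball.mem_nhds (hdisk hr θ))).continuousAt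
    have hcirc := (continuous_circleMap 0 r).continuousAt (x := θ)
    exact ((continuousAt_poissonKernel (circleMap_ne_mem_ball (hwr hr) θ)).comp hcirc).mul
      (hfθ.comp hcirc).norm
  · filter_upwards [Ioo_mem_nhdsLT hr₀1] with r hr
    refine .of_forall fun θ _ ↦ ?_
    have hP := poissonKernel_le_of_mem_sphere (hwr hr) (hsphere hr θ)
    have hPr : (r + ‖w‖) / (r - ‖w‖) ≤ 2 / (r₀ - ‖w‖) :=
      div_le_div₀ zero_le_two (by linarith [hr.2]) (by linarith) (by linarith [hr.1])
    have hC0 : 0 ≤ C := (norm_nonneg _).trans (hC _ (hdisk hr θ))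
    rw [Real.norm_of_nonneg (mul_nonneg
      (poissonKernel_nonneg_of_mem_sphere (hwr hr) (hsphere hr θ)) (norm_nonneg _))]
    exact mul_le_mul (hP.trans hPr) (hC _ (hdisk hr θ)) (norm_nonneg _) (by positivity)
  · filter_upwards [hlim] with θ hθ _
    have hcirc : Continuous fun r : ℝ ↦ circleMap 0 r θ := by fun_prop [circleMap]
    have hP : Tendsto (fun r : ℝ ↦ poissonKernel 0 w (circleMap 0 r θ)) (𝓝[<] 1)
        (𝓝 (poissonKernel 0 w (circleMap 0 1 θ))) :=
      ((continuousAt_poissonKernel (circleMap_ne_mem_ball hw θ)).tendsto.comp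
        (hcirc.tendsto 1)).mono_left nhdsWithin_le_nhds
    simpa only [mul_one] using hP.mul hθ

variable [CompleteSpace E]

lemma norm_le_circleAverage_poissonKernel_mul_norm {f : ℂ → E} {c w : ℂ} {R : ℝ}
    (hf : DiffContOnCl ℂ f (ball c R)) (hw : w ∈ ball c R) :
    ‖f w‖ ≤ circleAverage (fun ζ ↦ poissonKernel c w ζ * ‖f ζ‖) c R := by
  have hR : 0 ≤ R := (dist_nonneg.trans_lt hw).le
  rw [← hf.circleAverage_poissonKernel_smul hw, circleAverage_def, circleAverage_def, norm_smul,
    smul_eq_mul, norm_inv, Real.norm_of_nonneg two_pi_pos.le]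
  gcongr
  refine (intervalIntegral.norm_integral_le_integral_norm two_pi_pos.le).trans_eq ?_
  refine intervalIntegral.integral_congr fun θ _ ↦ ?_
  simp only [Pi.smul_apply', norm_smul, Real.norm_of_nonneg
    (poissonKernel_nonneg_of_mem_sphere hw (circleMap_mem_sphere c hR θ))]

theorem norm_le_one_of_tendsto_norm_circleMap {f : ℂ → E}
    (hf : DifferentiableOn ℂ f (ball 0 1)) {C : ℝ} (hC : ∀ z ∈ ball (0 : ℂ) 1, ‖f z‖ ≤ C)
    (hlim : ∀ᵐ θ : ℝ, Tendsto (fun r : ℝ ↦ ‖f (circleMap 0 r θ)‖) (𝓝[<] 1) (𝓝 1))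
    {w : ℂ} (hw : w ∈ ball (0 : ℂ) 1) : ‖f w‖ ≤ 1 := by
  refine ge_of_tendsto (tendsto_circleAverage_poissonKernel_mul_norm hf hC hlim hw) ?_
  filter_upwards [Ioo_mem_nhdsLT (mem_ball_zero_iff.1 hw)] with r hr
  exact norm_le_circleAverage_poissonKernel_mul_norm
    (hf.diffContOnCl_ball (closedBall_subset_ball hr.2)) (mem_ball_zero_iff.2 hr.1)

end PoissonBound

section Division

variable {𝕜 : Type*} [NontriviallyNormedField 𝕜]

lemma le_of_forall_mul_le_mul_add {m n : ℕ} (h : ∀ k : ℕ, k * m ≤ k * n + m) : m ≤ n := by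
  by_contra! hlt
  nlinarith [h (m + 1)]

lemma analyticOrderAt_le_of_forall_mul_pow_eventuallyEq {f g : 𝕜 → 𝕜} {x : 𝕜}
    (hf : AnalyticAt 𝕜 f x) (hg : AnalyticAt 𝕜 g x) (hf_top : analyticOrderAt f x ≠ ⊤)
    (hk : ∀ k : ℕ, ∃ u : 𝕜 → 𝕜, AnalyticAt 𝕜 u x ∧ u * f ^ k =ᶠ[𝓝 x] g ^ k * f) :
    analyticOrderAt f x ≤ analyticOrderAt g x := by
  obtain ⟨m, hm⟩ := ENat.ne_top_iff_exists.1 hf_top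
  cases hn : analyticOrderAt g x with
  | top => exact le_top
  | coe n =>
    rw [← hm, ENat.natCast_le_natCast]
    refine le_of_forall_mul_le_mul_add fun k ↦ ?_
    obtain ⟨u, hu, hEq⟩ := hk k
    have hord := analyticOrderAt_congr hEq
    rw [analyticOrderAt_mul hu (hf.pow k), analyticOrderAt_mul (hg.pow k) hf,
      analyticOrderAt_pow hf, analyticOrderAt_pow hg, ← hm, hn] at hord
    simp only [nsmul_eq_mul] at hord
    have : ((k * m : ℕ) : ℕ∞) ≤ ((k * n + m : ℕ) : ℕ∞) := by
      push_cast
      rw [← hord]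
      exact le_add_self
    exact_mod_cast this

lemma meromorphicOrderAt_div_nonneg_of_analyticOrderAt_le {f g : 𝕜 → 𝕜} {x : 𝕜}
    (hf : AnalyticAt 𝕜 f x) (hg : AnalyticAt 𝕜 g x) (hf_top : analyticOrderAt f x ≠ ⊤)
    (hle : analyticOrderAt f x ≤ analyticOrderAt g x) :
    0 ≤ meromorphicOrderAt (g / f) x := by
  rw [meromorphicOrderAt_div hg.meromorphicAt hf.meromorphicAt, hf.meromorphicOrderAt_eq,
    hg.meromorphicOrderAt_eq]
  obtain ⟨m, hm⟩ := ENat.ne_top_iff_exists.1 hf_top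
  rw [← hm] at hle ⊢
  cases hn : analyticOrderAt g x with
  | top => simp
  | coe n =>
    rw [hn, ENat.natCast_le_natCast] at hle
    simp only [ENat.map_natCast]
    exact_mod_cast sub_nonneg.2 (by exact_mod_cast hle : (m : ℤ) ≤ n)

theorem AnalyticOnNhd.exists_mul_eq_of_analyticOrderAt_le {f g : 𝕜 → 𝕜} {U : Set 𝕜}
    (hf : AnalyticOnNhd 𝕜 f U) (hg : AnalyticOnNhd 𝕜 g U)
    (hf_top : ∀ x ∈ U, analyticOrderAt f x ≠ ⊤)
    (hle : ∀ x ∈ U, analyticOrderAt f x ≤ analyticOrderAt g x) :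
    ∃ q : 𝕜 → 𝕜, AnalyticOnNhd 𝕜 q U ∧ ∀ x ∈ U, q x * f x = g x := by
  have hmero : MeromorphicOn (g / f) U := fun x hx ↦
    (hg x hx).meromorphicAt.div (hf x hx).meromorphicAt
  -- The normal form of `g / f` fills in its removable singularities at the zeros of `f`.
  have hq : AnalyticOnNhd 𝕜 (toMeromorphicNFOn (g / f) U) U := fun x hx ↦
    (meromorphicNFOn_toMeromorphicNFOn _ _ hx).meromorphicOrderAt_nonneg_iff_analyticAt.1 <| by
      rw [meromorphicOrderAt_toMeromorphicNFOn hmero hx]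
      exact meromorphicOrderAt_div_nonneg_of_analyticOrderAt_le (hf x hx) (hg x hx)
        (hf_top x hx) (hle x hx)
  refine ⟨_, hq, fun x hx ↦ ?_⟩
  have hf_ne : ∀ᶠ y in 𝓝[≠] x, f y ≠ 0 :=
    (hf x hx).eventually_eq_zero_or_eventually_ne_zero.resolve_left
      fun h ↦ hf_top x hx (analyticOrderAt_eq_top.2 h)
  have hNE : ∀ᶠ y in 𝓝[≠] x, toMeromorphicNFOn (g / f) U y * f y = g y := by
    filter_upwards [hmero.toMeromorphicNFOn_eq_self_on_nhdsNE hx, hf_ne] with y hqy hfy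
    rw [hqy, Pi.div_apply, div_mul_cancel₀ _ hfy]
  exact (((hq x hx).mul (hf x hx)).frequently_eq_iff_eventually_eq (hg x hx)).1
    hNE.frequently |>.self_of_nhds

end Division

lemma le_one_of_forall_pow_mul_le {a c : ℝ} (hc : 0 < c) (h : ∀ k : ℕ, a ^ k * c ≤ 1) : a ≤ 1 := by
  by_contra! ha
  obtain ⟨k, hk⟩ := (tendsto_pow_atTop_atTop_of_one_lt ha).eventually_gt_atTop c⁻¹ |>.exists
  have := h k
  rw [← le_div_iff₀ hc, one_div] at this
  linarith

lemma ofReal_mul_exp_mem_unitDisk {r : ℝ} (hr : r ∈ Ioo 0 1) (t : ℝ) :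
    (r : ℂ) * Complex.exp (t * Complex.I) ∈ unitDisk := by
  simpa [unitDisk, abs_of_pos hr.1] using hr.2

namespace IsInner

variable {h : ℂ → ℂ}

lemma tendsto_norm_circleMap (hh : IsInner h) :
    ∀ᵐ θ : ℝ, Tendsto (fun r : ℝ ↦ ‖h (circleMap 0 r θ)‖) (𝓝[<] 1) (𝓝 1) := by
  filter_upwards [hh.2.2] with θ ⟨L, hL, hlim⟩
  simpa only [circleMap_zero, hL] using hlim.norm

lemma norm_le_one (hh : IsInner h) {z : ℂ} (hz : z ∈ unitDisk) : ‖h z‖ ≤ 1 :=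
  let ⟨hd, ⟨_, hC⟩, _⟩ := hh
  norm_le_one_of_tendsto_norm_circleMap hd hC hh.tendsto_norm_circleMap hz

lemma analyticOnNhd (hh : IsInner h) : AnalyticOnNhd ℂ h unitDisk :=
  hh.1.analyticOnNhd isOpen_ball

lemma analyticOrderAt_ne_top (hh : IsInner h) {z : ℂ} (hz : z ∈ unitDisk) :
    analyticOrderAt h z ≠ ⊤ := by
  intro htop
  have hzero : EqOn h 0 unitDisk := hh.analyticOnNhd.eqOn_zero_of_preconnected_of_eventuallyEq_zero
    (convex_ball 0 1).isPreconnected hz (analyticOrderAt_eq_top.1 htop)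
  obtain ⟨t, L, hL, hlim⟩ := hh.2.2.exists
  have hlim0 : Tendsto (fun r : ℝ ↦ h (r * Complex.exp (t * Complex.I))) (𝓝[<] 1) (𝓝 0) :=
    tendsto_const_nhds.congr' <| eventually_of_mem (Ioo_mem_nhdsLT one_pos) fun r hr ↦
      (hzero (ofReal_mul_exp_mem_unitDisk hr t)).symm
  rw [tendsto_nhds_unique hlim hlim0, norm_zero] at hL
  exact zero_ne_one hL

lemma eventually_ne_zero (hh : IsInner h) {z : ℂ} (hz : z ∈ unitDisk) :
    ∀ᶠ w in 𝓝[≠] z, h w ≠ 0 :=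
  (hh.analyticOnNhd z hz).eventually_eq_zero_or_eventually_ne_zero.resolve_left
    fun h0 ↦ hh.analyticOrderAt_ne_top hz (analyticOrderAt_eq_top.2 h0)

lemma of_mul_eq {q h₀ h₁ : ℂ → ℂ} (hq : DifferentiableOn ℂ q unitDisk)
    (hq_bdd : ∃ C : ℝ, ∀ z ∈ unitDisk, ‖q z‖ ≤ C) (hh₀ : IsInner h₀) (hh₁ : IsInner h₁)
    (hmul : ∀ z ∈ unitDisk, q z * h₀ z = h₁ z) : IsInner q := by
  refine ⟨hq, hq_bdd, ?_⟩
  filter_upwards [hh₀.2.2, hh₁.2.2] with t ⟨L₀, hL₀, hlim₀⟩ ⟨L₁, hL₁, hlim₁⟩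
  have hL₀_ne : L₀ ≠ 0 := by rintro rfl; simp at hL₀
  refine ⟨L₁ / L₀, by rw [norm_div, hL₀, hL₁, div_one], (hlim₁.div hlim₀ hL₀_ne).congr' ?_⟩
  filter_upwards [Ioo_mem_nhdsLT one_pos, hlim₀.eventually_ne hL₀_ne] with r hr hne
  rw [Pi.div_apply, ← hmul _ (ofReal_mul_exp_mem_unitDisk hr t), mul_div_cancel_right₀ _ hne]

end IsInner

/-- **Lemma (division of inner functions).** Let `h₀, h₁` be inner. If for every `k ≥ 0`
the function `h₀ (h₁/h₀)^k` is inner (i.e. there is an inner `gₖ` with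
`gₖ · h₀^k = h₁^k · h₀` on `𝔻`), then `h₁/h₀` is inner (i.e. there is an inner `q` with
`q · h₀ = h₁` on `𝔻`). -/
theorem inner_quotient
    (h₀ h₁ : ℂ → ℂ) (hh₀ : IsInner h₀) (hh₁ : IsInner h₁)
    (h : ∀ k : ℕ, ∃ g : ℂ → ℂ, IsInner g ∧
      ∀ z ∈ unitDisk, g z * (h₀ z) ^ k = (h₁ z) ^ k * h₀ z) :
    ∃ q : ℂ → ℂ, IsInner q ∧ ∀ z ∈ unitDisk, q z * h₀ z = h₁ z := by
  choose g hg hgmul using h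
  have hord : ∀ z ∈ unitDisk, analyticOrderAt h₀ z ≤ analyticOrderAt h₁ z := fun z hz ↦
    analyticOrderAt_le_of_forall_mul_pow_eventuallyEq (hh₀.analyticOnNhd z hz)
      (hh₁.analyticOnNhd z hz) (hh₀.analyticOrderAt_ne_top hz) fun k ↦
      ⟨g k, (hg k).analyticOnNhd z hz, eventually_of_mem (isOpen_ball.mem_nhds hz) (hgmul k)⟩
  obtain ⟨q, hq, hqmul⟩ := hh₀.analyticOnNhd.exists_mul_eq_of_analyticOrderAt_le
    hh₁.analyticOnNhd (fun z hz ↦ hh₀.analyticOrderAt_ne_top hz) hord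
  have hq_le_of_ne : ∀ z ∈ unitDisk, h₀ z ≠ 0 → ‖q z‖ ≤ 1 := fun z hz hz0 ↦
    le_one_of_forall_pow_mul_le (norm_pos_iff.2 hz0) fun k ↦ by
      have hgk : g k z = q z ^ k * h₀ z := by
        apply mul_right_cancel₀ (pow_ne_zero k hz0)
        rw [hgmul k z hz, ← hqmul z hz]
        ring
      simpa [hgk] using (hg k).norm_le_one hz
  have hq_le : ∀ z ∈ unitDisk, ‖q z‖ ≤ 1 := fun z hz ↦
    le_of_tendsto ((hq z hz).continuousAt.norm.tendsto.mono_left nhdsWithin_le_nhds) <| by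
      filter_upwards [hh₀.eventually_ne_zero hz,
        nhdsWithin_le_nhds (isOpen_ball.mem_nhds hz)] with w hw0 hw
      exact hq_le_of_ne w hw hw0
  exact ⟨q, .of_mul_eq hq.differentiableOn ⟨1, hq_le⟩ hh₀ hh₁ hqmul, hqmul⟩
end
end

section
/- The set of finite Blaschke products is closed in the set of inner functions with respect to the H^∞ norm: if (B_n) is a sequence of finite Blaschke products, h is an inner function on 𝔻, and sup_{z ∈ 𝔻} |B_n(z) − h(z)| → 0 as n → ∞, then h is a finite Blaschke product. -/
open Complex MeasureTheory Filter Set Metric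

noncomputable section

/-!
Each finite Blaschke product has modulus tending to `1` as `‖z‖ → 1`, uniformly in the
boundary point, so the uniform limit `h` has the same property. Such an `h` has only finitely
many zeros in `𝔻`. Dividing `h` by the Blaschke product `Φ` with these zeros leaves a zero-free
holomorphic `q` with `‖q z‖ → 1` at the circle; the maximum principle for `q` and `q⁻¹` gives
`‖q‖ = 1` on `𝔻`, so `q` is a unimodular constant and `h = q · Φ`.
-/

open scoped Topology ComplexConjugate

lemma mem_unitDisk_iff {z : ℂ} : z ∈ unitDisk ↔ ‖z‖ < 1 := mem_ball_zero_iff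

lemma isOpen_unitDisk : IsOpen unitDisk := isOpen_ball

lemma isPreconnected_unitDisk : IsPreconnected unitDisk := (convex_ball (0 : ℂ) 1).isPreconnected

def toUnitCircle : Filter ℂ := comap (‖·‖) (𝓝[<] 1)

lemma hasBasis_toUnitCircle :
    toUnitCircle.HasBasis (· < 1) fun r => (‖·‖) ⁻¹' Ioo r 1 :=
  (nhdsLT_basis (1 : ℝ)).comap _

instance : toUnitCircle.NeBot := by
  refine hasBasis_toUnitCircle.neBot_iff.2 fun {r} hr => ?_
  refine ⟨((max r 0 + 1) / 2 : ℝ), ?_⟩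
  have : max r 0 < 1 := max_lt hr one_pos
  rw [mem_preimage, Complex.norm_of_nonneg (by positivity)]
  constructor <;> linarith [le_max_left r 0]

lemma eventually_mem_unitDisk_toUnitCircle : ∀ᶠ z in toUnitCircle, z ∈ unitDisk :=
  eventually_of_mem (hasBasis_toUnitCircle.mem_of_mem (i := 0) one_pos) fun _ hz =>
    mem_unitDisk_iff.2 hz.2

lemma one_sub_conj_mul_ne_zero {a z : ℂ} (ha : ‖a‖ < 1) (hz : ‖z‖ ≤ 1) :
    1 - conj a * z ≠ 0 := by
  refine sub_ne_zero.2 fun h => ?_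
  have := congrArg norm h
  rw [norm_one, norm_mul, Complex.norm_conj] at this
  nlinarith [norm_nonneg a, norm_nonneg z]

lemma one_sub_norm_blaschkeFactor_sq {a z : ℂ} (hden : 1 - conj a * z ≠ 0) :
    1 - ‖blaschkeFactor a z‖ ^ 2 = (1 - ‖a‖ ^ 2) * (1 - ‖z‖ ^ 2) / ‖1 - conj a * z‖ ^ 2 := by
  have hd : 0 < ‖1 - conj a * z‖ ^ 2 := by positivity
  have hnormSq : ‖1 - conj a * z‖ ^ 2 - ‖a - z‖ ^ 2 = (1 - ‖a‖ ^ 2) * (1 - ‖z‖ ^ 2) := by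
    simp only [← Complex.normSq_eq_norm_sq, Complex.normSq_apply, Complex.sub_re, Complex.sub_im,
      Complex.mul_re, Complex.mul_im, Complex.one_re, Complex.one_im, Complex.conj_re,
      Complex.conj_im]
    ring
  have hb : ‖blaschkeFactor a z‖ = ‖a - z‖ / ‖1 - conj a * z‖ := by
    rw [blaschkeFactor]
    split_ifs with ha
    · simp [ha]
    · rw [norm_mul, norm_div, Complex.norm_real, norm_norm, div_self (norm_ne_zero_iff.2 ha),
        one_mul, norm_div]
  rw [hb, div_pow, eq_div_iff hd.ne', sub_mul, div_mul_cancel₀ _ hd.ne', one_mul, hnormSq]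

lemma norm_blaschkeFactor_le_one {a z : ℂ} (ha : ‖a‖ < 1) (hz : ‖z‖ ≤ 1) :
    ‖blaschkeFactor a z‖ ≤ 1 := by
  have h := one_sub_norm_blaschkeFactor_sq (one_sub_conj_mul_ne_zero ha hz)
  have : 0 ≤ (1 - ‖a‖ ^ 2) * (1 - ‖z‖ ^ 2) / ‖1 - conj a * z‖ ^ 2 := by
    have := norm_nonneg a; have := norm_nonneg z
    exact div_nonneg (mul_nonneg (by nlinarith) (by nlinarith)) (sq_nonneg _)
  nlinarith [norm_nonneg (blaschkeFactor a z)]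

lemma one_sub_le_norm_blaschkeFactor {a z : ℂ} (ha : ‖a‖ < 1) (hz : ‖z‖ ≤ 1) :
    1 - 4 * (1 - ‖z‖) / (1 - ‖a‖) ≤ ‖blaschkeFactor a z‖ := by
  have hden := one_sub_conj_mul_ne_zero ha hz
  have h := one_sub_norm_blaschkeFactor_sq hden
  have hA : 0 < 1 - ‖a‖ := by linarith
  have hd : 1 - ‖a‖ ≤ ‖1 - conj a * z‖ := by
    have := norm_sub_norm_le (1 : ℂ) (conj a * z)
    rw [norm_one, norm_mul, Complex.norm_conj] at this
    nlinarith [norm_nonneg a, norm_nonneg z]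
  have hle := norm_blaschkeFactor_le_one ha hz
  have := norm_nonneg a; have := norm_nonneg z
  have hdefect : 1 - ‖blaschkeFactor a z‖ ^ 2 ≤ 4 * (1 - ‖z‖) / (1 - ‖a‖) := by
    rw [h, div_le_div_iff₀ (by positivity) hA]
    calc (1 - ‖a‖ ^ 2) * (1 - ‖z‖ ^ 2) * (1 - ‖a‖)
        = (1 - ‖a‖) ^ 2 * (1 - ‖z‖) * ((1 + ‖a‖) * (1 + ‖z‖)) := by ring
      _ ≤ (1 - ‖a‖) ^ 2 * (1 - ‖z‖) * 4 := by gcongr; nlinarith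
      _ = 4 * (1 - ‖z‖) * (1 - ‖a‖) ^ 2 := by ring
      _ ≤ 4 * (1 - ‖z‖) * ‖1 - conj a * z‖ ^ 2 := by gcongr
  nlinarith [norm_nonneg (blaschkeFactor a z)]

lemma tendsto_norm_blaschkeFactor {a : ℂ} (ha : ‖a‖ < 1) :
    Tendsto (fun z => ‖blaschkeFactor a z‖) toUnitCircle (𝓝 1) := by
  have hz : Tendsto (fun z : ℂ => ‖z‖) toUnitCircle (𝓝 1) :=
    tendsto_comap.mono_right nhdsWithin_le_nhds
  have hlow : Tendsto (fun z : ℂ => 1 - 4 * (1 - ‖z‖) / (1 - ‖a‖)) toUnitCircle (𝓝 1) := by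
    have := (((tendsto_const_nhds (x := (1 : ℝ))).sub hz).const_mul 4).div_const (1 - ‖a‖)
    simpa using (tendsto_const_nhds (x := (1 : ℝ))).sub this
  have hle : ∀ᶠ z in toUnitCircle, ‖z‖ ≤ 1 :=
    eventually_mem_unitDisk_toUnitCircle.mono fun z hz => (mem_unitDisk_iff.1 hz).le
  exact tendsto_of_tendsto_of_tendsto_of_le_of_le' hlow tendsto_const_nhds
    (hle.mono fun z hz => one_sub_le_norm_blaschkeFactor ha hz)
    (hle.mono fun z hz => norm_blaschkeFactor_le_one ha hz)

lemma tendsto_norm_prod_blaschkeFactor {ι : Type*} (s : Finset ι) {a : ι → ℂ}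
    (ha : ∀ i ∈ s, ‖a i‖ < 1) :
    Tendsto (fun z => ‖∏ i ∈ s, blaschkeFactor (a i) z‖) toUnitCircle (𝓝 1) := by
  simpa only [norm_prod, Finset.prod_const_one] using
    tendsto_finsetProd s fun i hi => tendsto_norm_blaschkeFactor (ha i hi)

lemma IsFiniteBlaschke.tendsto_norm {B : ℂ → ℂ} (hB : IsFiniteBlaschke B) :
    Tendsto (fun z => ‖B z‖) toUnitCircle (𝓝 1) := by
  obtain ⟨c, N, a, hc, ha, hBeq⟩ := hB
  refine (tendsto_norm_prod_blaschkeFactor Finset.univ fun i _ =>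
    mem_unitDisk_iff.1 (ha i)).congr' ?_
  filter_upwards [eventually_mem_unitDisk_toUnitCircle] with z hz
  rw [hBeq z hz, norm_mul, hc, one_mul]

lemma differentiableOn_iterate_dslope {f : ℂ → ℂ} {U : Set ℂ} (hU : IsOpen U) {b : ℂ} (hb : b ∈ U)
    (hf : DifferentiableOn ℂ f U) (m : ℕ) :
    DifferentiableOn ℂ ((Function.swap dslope b)^[m] f) U := by
  induction m with
  | zero => exact hf
  | succ m ih =>
    rw [Function.iterate_succ_apply']
    exact (Complex.differentiableOn_dslope (hU.mem_nhds hb)).2 ih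

lemma exists_eq_pow_mul_of_differentiableOn {f : ℂ → ℂ} {U : Set ℂ} (hU : IsOpen U)
    (hU' : IsPreconnected U) (hf : DifferentiableOn ℂ f U) (hne : ∃ z ∈ U, f z ≠ 0) {b : ℂ}
    (hb : b ∈ U) :
    ∃ (m : ℕ) (g : ℂ → ℂ), DifferentiableOn ℂ g U ∧ g b ≠ 0 ∧ ∀ z, f z = (z - b) ^ m * g z := by
  obtain ⟨p, hp⟩ := hf.analyticAt (hU.mem_nhds hb)
  have hp0 : p ≠ 0 := by
    rintro rfl
    obtain ⟨z, hz, hfz⟩ := hne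
    exact hfz ((hf.analyticOnNhd hU).eqOn_zero_of_preconnected_of_eventuallyEq_zero hU' hb
      (hp.locally_zero_iff.2 rfl) hz)
  exact ⟨p.order, _, differentiableOn_iterate_dslope hU hb hf _,
    hp.iterate_dslope_fslope_ne_zero hp0, hp.eq_pow_order_mul_iterate_dslope⟩

theorem exists_eq_prod_sub_mul_of_differentiableOn {U : Set ℂ} (hU : IsOpen U)
    (hU' : IsPreconnected U) (S : Finset ℂ) {f : ℂ → ℂ} (hf : DifferentiableOn ℂ f U)
    (hS : ∀ z ∈ U, f z = 0 → z ∈ S) (hne : ∃ z ∈ U, f z ≠ 0) :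
    ∃ (l : List ℂ) (u : ℂ → ℂ), (∀ a ∈ l, a ∈ U) ∧ DifferentiableOn ℂ u U ∧
      (∀ z ∈ U, u z ≠ 0) ∧ ∀ z ∈ U, f z = (l.map (z - ·)).prod * u z := by
  induction S using Finset.strongInduction generalizing f with
  | H S ih =>
    by_cases hzero : ∃ b ∈ U, f b = 0
    · obtain ⟨b, hb, hfb⟩ := hzero
      obtain ⟨m, g, hg, hgb, hfg⟩ := exists_eq_pow_mul_of_differentiableOn hU hU' hf hne hb
      have hgS : ∀ z ∈ U, g z = 0 → z ∈ S.erase b := fun z hz hgz =>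
        Finset.mem_erase.2 ⟨by rintro rfl; exact hgb hgz, hS z hz (by rw [hfg, hgz, mul_zero])⟩
      obtain ⟨l, u, hl, hu, hu0, hgl⟩ :=
        ih _ (Finset.erase_ssubset (hS b hb hfb)) hg hgS ⟨b, hb, hgb⟩
      refine ⟨List.replicate m b ++ l, u, ?_, hu, hu0, fun z hz => ?_⟩
      · simpa [or_imp, forall_and] using And.intro (fun _ => hb) hl
      · rw [hfg, hgl z hz, List.map_append, List.prod_append, List.map_replicate,
          List.prod_replicate, mul_assoc]
    · push Not at hzero
      exact ⟨[], f, by simp, hf, hzero, by simp⟩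

def blaschkeCofactor (a z : ℂ) : ℂ :=
  if a = 0 then 1 else -(a / ‖a‖) * (1 - conj a * z)

lemma blaschkeFactor_mul_blaschkeCofactor {a z : ℂ} (hden : 1 - conj a * z ≠ 0) :
    blaschkeFactor a z * blaschkeCofactor a z = z - a := by
  unfold blaschkeFactor blaschkeCofactor
  split_ifs with ha
  · simp [ha]
  · have : (‖a‖ : ℂ) ≠ 0 := by exact_mod_cast norm_ne_zero_iff.2 ha
    have hden' : 1 - z * conj a ≠ 0 := by rwa [mul_comm]
    field_simp
    ring

lemma blaschkeCofactor_ne_zero {a z : ℂ} (hden : 1 - conj a * z ≠ 0) :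
    blaschkeCofactor a z ≠ 0 := by
  unfold blaschkeCofactor
  split_ifs with ha
  · exact one_ne_zero
  · have : (‖a‖ : ℂ) ≠ 0 := by exact_mod_cast norm_ne_zero_iff.2 ha
    exact mul_ne_zero (neg_ne_zero.2 (div_ne_zero ha this)) hden

lemma differentiable_blaschkeCofactor (a : ℂ) : Differentiable ℂ (blaschkeCofactor a) := by
  unfold blaschkeCofactor
  split_ifs
  · exact differentiable_const _
  · fun_prop

lemma finite_zeros_of_tendsto_norm {f : ℂ → ℂ} (hf : DifferentiableOn ℂ f unitDisk) {c : ℝ}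
    (hc : c ≠ 0) (hlim : Tendsto (fun z => ‖f z‖) toUnitCircle (𝓝 c)) :
    (unitDisk ∩ f ⁻¹' {0}).Finite ∧ ∃ z ∈ unitDisk, f z ≠ 0 := by
  have hev : ∀ᶠ z in toUnitCircle, z ∈ unitDisk ∧ f z ≠ 0 :=
    eventually_mem_unitDisk_toUnitCircle.and <|
      (hlim.eventually_ne hc).mono fun _ hz => norm_ne_zero_iff.1 hz
  have hne := hev.exists
  refine ⟨?_, hne⟩
  obtain ⟨r, hr, hrf⟩ := hasBasis_toUnitCircle.eventually_iff.1 hev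
  have hzeros : unitDisk ∩ f ⁻¹' {0} ⊆ closedBall 0 r := fun z ⟨hz, hfz⟩ =>
    mem_closedBall_zero_iff.2 <| not_lt.1 fun hrz => (hrf ⟨hrz, mem_unitDisk_iff.1 hz⟩).2 hfz
  obtain h0 | hcod := AnalyticOnNhd.eqOn_zero_or_eventually_ne_zero_of_preconnected
    (hf.analyticOnNhd isOpen_unitDisk) isPreconnected_unitDisk
  · obtain ⟨z, hz, hfz⟩ := hne
    exact absurd (h0 hz) hfz
  · refine ((isCompact_closedBall 0 r).finite_sdiff_of_mem_codiscreteWithin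
      (codiscreteWithin_mono (closedBall_subset_ball hr) hcod)).subset fun z hz => ?_
    exact ⟨hzeros hz, fun hfz => hfz hz.2⟩

lemma norm_le_of_tendsto_norm {g : ℂ → ℂ} (hg : DifferentiableOn ℂ g unitDisk) {c : ℝ}
    (hlim : Tendsto (fun z => ‖g z‖) toUnitCircle (𝓝 c)) {z : ℂ} (hz : z ∈ unitDisk) :
    ‖g z‖ ≤ c := by
  refine le_of_forall_pos_le_add fun ε hε => ?_
  obtain ⟨r, hr, hrg⟩ := hasBasis_toUnitCircle.eventually_iff.1 <|
    hlim.eventually (gt_mem_nhds (lt_add_of_pos_right c hε))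
  have hz1 := mem_unitDisk_iff.1 hz
  obtain ⟨ρ, hρ, hρ1⟩ := exists_between (max_lt hr hz1)
  obtain ⟨hrρ, hzρ⟩ := max_lt_iff.1 hρ
  have hρ0 : ρ ≠ 0 := (lt_of_le_of_lt (norm_nonneg z) hzρ).ne'
  refine Complex.norm_le_of_forall_mem_frontier_norm_le isBounded_ball
    (hg.diffContOnCl_ball (closedBall_subset_ball hρ1)) (fun w hw => ?_)
    (subset_closure (mem_ball_zero_iff.2 hzρ))
  rw [frontier_ball 0 hρ0, mem_sphere_zero_iff_norm] at hw
  exact (hrg (show r < ‖w‖ ∧ ‖w‖ < 1 from hw ▸ ⟨hrρ, hρ1⟩)).le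

lemma exists_eqOn_const_of_tendsto_norm {g : ℂ → ℂ} (hg : DifferentiableOn ℂ g unitDisk)
    (hg0 : ∀ z ∈ unitDisk, g z ≠ 0) (hlim : Tendsto (fun z => ‖g z‖) toUnitCircle (𝓝 1)) :
    ∃ c : ℂ, ‖c‖ = 1 ∧ ∀ z ∈ unitDisk, g z = c := by
  have hinv : Tendsto (fun z => ‖(g z)⁻¹‖) toUnitCircle (𝓝 1) := by
    simpa only [norm_inv, inv_one] using hlim.inv₀ one_ne_zero
  have hnorm : ∀ z ∈ unitDisk, ‖g z‖ = 1 := fun z hz => by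
    have h1 := norm_le_of_tendsto_norm hg hlim hz
    have h2 := norm_le_of_tendsto_norm (hg.inv hg0) hinv hz
    rw [Pi.inv_apply, norm_inv, inv_le_one₀ (norm_pos_iff.2 (hg0 z hz))] at h2
    exact le_antisymm h1 h2
  have h0 : (0 : ℂ) ∈ unitDisk := mem_ball_self one_pos
  have hmax : IsMaxOn (norm ∘ g) unitDisk 0 := isMaxOn_iff.2 fun z hz => by
    simp only [Function.comp_apply, hnorm z hz, hnorm 0 h0, le_refl]
  exact ⟨g 0, hnorm 0 h0, fun z hz => Complex.eqOn_of_isPreconnected_of_isMaxOn_norm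
    isPreconnected_unitDisk isOpen_unitDisk hg h0 hmax hz⟩

lemma tendsto_norm_of_forall_eventually_norm_sub_le {ι α E : Type*} [SeminormedAddCommGroup E]
    {p : Filter ι} [p.NeBot] {l : Filter α} {F : ι → α → E} {f : α → E} {s : Set α} {c : ℝ}
    (hF : ∀ i, Tendsto (fun z => ‖F i z‖) l (𝓝 c)) (hs : ∀ᶠ z in l, z ∈ s)
    (hconv : ∀ ε > 0, ∀ᶠ i in p, ∀ z ∈ s, ‖F i z - f z‖ ≤ ε) :
    Tendsto (fun z => ‖f z‖) l (𝓝 c) := by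
  refine Metric.tendsto_nhds.2 fun ε hε => ?_
  obtain ⟨i, hi⟩ := (hconv (ε / 2) (half_pos hε)).exists
  filter_upwards [hs, Metric.tendsto_nhds.1 (hF i) (ε / 2) (half_pos hε)] with z hz hFz
  rw [Real.dist_eq] at hFz ⊢
  calc |‖f z‖ - c| ≤ |‖F i z‖ - ‖f z‖| + |‖F i z‖ - c| := by
        rw [abs_sub_comm (‖F i z‖)]; exact abs_sub_le _ _ _
    _ < ε / 2 + ε / 2 := add_lt_add_of_le_of_lt ((abs_norm_sub_norm_le _ _).trans (hi z hz)) hFz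
    _ = ε := add_halves ε

/-- Fatou's theorem. -/
theorem isFiniteBlaschke_of_tendsto_norm {f : ℂ → ℂ} (hf : DifferentiableOn ℂ f unitDisk)
    (hlim : Tendsto (fun z => ‖f z‖) toUnitCircle (𝓝 1)) : IsFiniteBlaschke f := by
  obtain ⟨hfin, hne⟩ := finite_zeros_of_tendsto_norm hf one_ne_zero hlim
  obtain ⟨l, u, hl, hu, hu0, hfu⟩ := exists_eq_prod_sub_mul_of_differentiableOn isOpen_unitDisk
    isPreconnected_unitDisk hfin.toFinset hf (fun z hz hfz => hfin.mem_toFinset.2 ⟨hz, hfz⟩) hne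
  set a : Fin l.length → ℂ := fun i => l[i]
  have ha : ∀ i, ‖a i‖ < 1 := fun i => mem_unitDisk_iff.1 (hl _ (l.getElem_mem i.2))
  have hden : ∀ i, ∀ z ∈ unitDisk, 1 - conj (a i) * z ≠ 0 := fun i z hz =>
    one_sub_conj_mul_ne_zero (ha i) (mem_unitDisk_iff.1 hz).le
  set Φ := fun z => ∏ i, blaschkeFactor (a i) z
  set q := fun z => (∏ i, blaschkeCofactor (a i) z) * u z
  have hfq : ∀ z ∈ unitDisk, f z = Φ z * q z := fun z hz => by
    rw [hfu z hz, ← Fin.prod_univ_fun_getElem, ← mul_assoc, ← Finset.prod_mul_distrib]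
    congr 1
    exact Finset.prod_congr rfl fun i _ => (blaschkeFactor_mul_blaschkeCofactor (hden i z hz)).symm
  have hq : DifferentiableOn ℂ q unitDisk :=
    (Differentiable.fun_finsetProd fun i _ =>
      differentiable_blaschkeCofactor (a i)).differentiableOn.mul hu
  have hq0 : ∀ z ∈ unitDisk, q z ≠ 0 := fun z hz =>
    mul_ne_zero (Finset.prod_ne_zero_iff.2 fun i _ => blaschkeCofactor_ne_zero (hden i z hz))
      (hu0 z hz)
  have hΦ : Tendsto (fun z => ‖Φ z‖) toUnitCircle (𝓝 1) :=
    tendsto_norm_prod_blaschkeFactor Finset.univ fun i _ => ha i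
  have hqlim : Tendsto (fun z => ‖q z‖) toUnitCircle (𝓝 1) := by
    refine (div_one (1 : ℝ) ▸ hlim.div hΦ one_ne_zero).congr' ?_
    filter_upwards [eventually_mem_unitDisk_toUnitCircle, hΦ.eventually_ne one_ne_zero]
      with z hz hΦz
    rw [Pi.div_apply, hfq z hz, norm_mul, mul_div_cancel_left₀ _ hΦz]
  obtain ⟨c, hc, hqc⟩ := exists_eqOn_const_of_tendsto_norm hq hq0 hqlim
  exact ⟨c, l.length, a, hc, fun i => mem_unitDisk_iff.2 (ha i), fun z hz => by
    rw [hfq z hz, hqc z hz, mul_comm]⟩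

/-- The finite Blaschke products form a closed subset of the inner functions in the
`H^∞` norm: if finite Blaschke products `Bₙ` converge to an inner function `h`
uniformly on `𝔻`, then `h` is a finite Blaschke product. -/
theorem blaschke_closed_in_inner
    (B : ℕ → (ℂ → ℂ)) (h : ℂ → ℂ)
    (hB : ∀ n, IsFiniteBlaschke (B n)) (hh : IsInner h)
    (hconv : ∀ ε : ℝ, 0 < ε → ∀ᶠ n in Filter.atTop,
      ∀ z ∈ unitDisk, ‖B n z - h z‖ ≤ ε) :
    IsFiniteBlaschke h :=
  isFiniteBlaschke_of_tendsto_norm hh.1 <| tendsto_norm_of_forall_eventually_norm_sub_le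
    (fun n => (hB n).tendsto_norm) eventually_mem_unitDisk_toUnitCircle hconv
end
end
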